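/- arXiv:1704.01234 — 4 statements merged into one kernel-verified Lean document; each statement's English description precedes it below -/
import Mathlib

section
/- A Dirichlet series f(s) = \sum_{k=1}^\infty a_k k^{-s} with a_1 \neq 0 has finite abscissa of convergence if and only if the formal inverse Dirichlet series \sum_{k=1}^\infty \mu_f(k) k^{-s} has finite abscissa of convergence, where \mu_f is the Dirichlet-convolution inverse of (a_k). -/
/-!
A Dirichlet series converges somewhere iff its coefficients grow at most polynomially: the terms
of a convergent series are bounded, and polynomial growth gives absolute convergence far enough
to the right. So it suffices to show that the Dirichlet inverse of a polynomially bounded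
sequence is polynomially bounded (the inverse relation being symmetric). If `‖a k‖ ≤ C k ^ M`,
the recursion `μ k = -μ 1 ∑_{d ∣ k, d > 1} a d μ (k / d)` propagates the bound
`‖μ k‖ ≤ ‖μ 1‖ k ^ (M + N + 2)` by strong induction: the divisor `d` contributes a factor
`d ^ -(N + 2) ≤ 2 ^ -N d ^ -2`, so the whole sum is at most `2 ^ -N ζ(2)` times the bound, and
`2 ^ N` is chosen to beat `2 ‖μ 1‖ C`.
-/

open Finset Filter Topology

theorem sum_range_succ_term_eq_sum_Icc (f : ℕ → ℂ) (s : ℂ) (n : ℕ) :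
    ∑ k ∈ range (n + 1), LSeries.term f s k = ∑ k ∈ Icc 1 n, f k * (k : ℂ) ^ (-s) := by
  induction n with
  | zero => simp
  | succ n ih =>
    rw [sum_range_succ, ih, sum_Icc_succ_top (by omega), LSeries.term_of_ne_zero n.succ_ne_zero,
      Complex.cpow_neg, div_eq_mul_inv]

theorem LSeriesSummable.tendsto_sum_Icc {f : ℕ → ℂ} {s : ℂ} (h : LSeriesSummable f s) :
    Tendsto (fun n ↦ ∑ k ∈ Icc 1 n, f k * (k : ℂ) ^ (-s)) atTop (𝓝 (LSeries f s)) :=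
  (h.hasSum.tendsto_sum_nat.comp (tendsto_add_atTop_nat 1)).congr
    (sum_range_succ_term_eq_sum_Icc f s)

def PolynomiallyBounded (f : ℕ → ℂ) : Prop :=
  ∃ C : ℝ, ∃ M : ℕ, ∀ k ≠ 0, ‖f k‖ ≤ C * (k : ℝ) ^ M

theorem PolynomiallyBounded.of_tendsto_sum_Icc {f : ℕ → ℂ} {s L : ℂ}
    (h : Tendsto (fun n ↦ ∑ k ∈ Icc 1 n, f k * (k : ℂ) ^ (-s)) atTop (𝓝 L)) :
    PolynomiallyBounded f := by
  obtain ⟨C, hC⟩ := isBounded_iff_forall_norm_le.mp (Metric.isBounded_range_of_tendsto _ h)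
  have hterm : ∀ k ≠ 0, ‖f k * (k : ℂ) ^ (-s)‖ ≤ 2 * C := by
    intro k hk
    obtain ⟨n, rfl⟩ := Nat.exists_eq_succ_of_ne_zero hk
    have hdiff : f (n + 1) * ((n + 1 : ℕ) : ℂ) ^ (-s) =
        ∑ k ∈ Icc 1 (n + 1), f k * (k : ℂ) ^ (-s) - ∑ k ∈ Icc 1 n, f k * (k : ℂ) ^ (-s) := by
      rw [sum_Icc_succ_top (by omega), add_sub_cancel_left]
    rw [hdiff, two_mul]
    exact (norm_sub_le _ _).trans (add_le_add (hC _ ⟨_, rfl⟩) (hC _ ⟨_, rfl⟩))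
  refine ⟨2 * C, ⌈s.re⌉₊, fun k hk ↦ ?_⟩
  have hk1 : (1 : ℝ) ≤ k := mod_cast Nat.one_le_iff_ne_zero.mpr hk
  have hC0 : 0 ≤ 2 * C := (norm_nonneg _).trans (hterm 1 one_ne_zero)
  calc ‖f k‖ = ‖f k * (k : ℂ) ^ (-s)‖ * (k : ℝ) ^ s.re := by
        rw [norm_mul, Complex.norm_natCast_cpow_of_pos (Nat.pos_of_ne_zero hk), Complex.neg_re,
          mul_assoc, ← Real.rpow_add (by linarith), neg_add_cancel, Real.rpow_zero, mul_one]
    _ ≤ 2 * C * (k : ℝ) ^ s.re := by gcongr; exact hterm k hk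
    _ ≤ 2 * C * (k : ℝ) ^ ⌈s.re⌉₊ := by
        rw [← Real.rpow_natCast]; gcongr; exact Nat.le_ceil _

theorem PolynomiallyBounded.lSeriesSummable {f : ℕ → ℂ} (hf : PolynomiallyBounded f) :
    ∃ s, LSeriesSummable f s := by
  obtain ⟨C, M, hC⟩ := hf
  refine ⟨M + 2, LSeriesSummable_of_le_const_mul_rpow (x := M + 1) (by simp) ⟨C, fun k hk ↦ ?_⟩⟩
  simpa [← Real.rpow_natCast] using hC k hk

theorem sum_inv_sq_le_two (s : Finset ℕ) : ∑ d ∈ s, ((d : ℝ) ^ 2)⁻¹ ≤ 2 := by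
  have hzeta : ∑ d ∈ s, ((d : ℝ) ^ 2)⁻¹ ≤ Real.pi ^ 2 / 6 :=
    sum_le_hasSum s (fun _ _ ↦ by positivity) (by simpa [one_div] using hasSum_zeta_two)
  nlinarith [Real.pi_lt_d2, Real.pi_pos]

theorem pow_mul_div_pow_le {d k : ℝ} (hd : 2 ≤ d) (hk : 0 ≤ k) (M N : ℕ) :
    d ^ M * (k / d) ^ (M + N + 2) ≤ k ^ (M + N + 2) / 2 ^ N * (d ^ 2)⁻¹ := by
  have hd0 : 0 < d := by linarith
  have h2N : (2 : ℝ) ^ N ≤ d ^ N := by gcongr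
  rw [div_pow, show d ^ (M + N + 2) = d ^ M * d ^ N * d ^ 2 by ring]
  field_simp
  gcongr

def IsDirichletInverse {R : Type*} [CommRing R] (a μ : ℕ → R) : Prop :=
  ∀ k : ℕ, 1 ≤ k → (∑ d ∈ k.divisors, a d * μ (k / d)) = if k = 1 then 1 else 0

namespace IsDirichletInverse

variable {R : Type*} [CommRing R] {a μ : ℕ → R}

theorem mul_apply_one (h : IsDirichletInverse a μ) : a 1 * μ 1 = 1 := by
  simpa using h 1 le_rfl

theorem symm (h : IsDirichletInverse a μ) : IsDirichletInverse μ a := by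
  intro k hk
  rw [← h k hk, ← Nat.sum_div_divisors]
  refine sum_congr rfl fun d hd ↦ ?_
  rw [Nat.div_div_self (Nat.dvd_of_mem_divisors hd) (by omega), mul_comm]

theorem eq_neg_mul_sum (h : IsDirichletInverse a μ) {k : ℕ} (hk0 : k ≠ 0) (hk1 : k ≠ 1) :
    μ k = -(μ 1 * ∑ d ∈ k.divisors.erase 1, a d * μ (k / d)) := by
  have hsum := h k (Nat.one_le_iff_ne_zero.mpr hk0)
  rw [if_neg hk1, ← add_sum_erase _ _ (Nat.one_mem_divisors.mpr hk0), Nat.div_one] at hsum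
  linear_combination μ 1 * hsum - μ k * h.mul_apply_one

theorem polynomiallyBounded {a μ : ℕ → ℂ} (h : IsDirichletInverse a μ)
    (ha : PolynomiallyBounded a) : PolynomiallyBounded μ := by
  obtain ⟨C, M, hC⟩ := ha
  have hC0 : 0 ≤ C := by simpa using (norm_nonneg _).trans (hC 1 one_ne_zero)
  set B := ‖μ 1‖
  obtain ⟨N, hN⟩ := pow_unbounded_of_one_lt (2 * B * C) one_lt_two
  refine ⟨B, M + N + 2, fun k hk ↦ ?_⟩
  induction k using Nat.strong_induction_on with
  | _ k ih =>
  rcases eq_or_ne k 1 with rfl | hk1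
  · simp [B]
  have hterm : ∀ d ∈ k.divisors.erase 1,
      ‖a d * μ (k / d)‖ ≤ B * C * ((k : ℝ) ^ (M + N + 2) / 2 ^ N) * ((d : ℝ) ^ 2)⁻¹ := by
    intro d hd
    obtain ⟨hd1, hdk⟩ := mem_erase.mp hd
    have hd0 := Nat.pos_of_mem_divisors hdk
    have hdvd := Nat.dvd_of_mem_divisors hdk
    have hq0 : k / d ≠ 0 := (Nat.div_pos (Nat.divisor_le hdk) hd0).ne'
    have hq := ih (k / d) (Nat.div_lt_self (Nat.pos_of_ne_zero hk) (by omega)) hq0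
    rw [Nat.cast_div hdvd (by positivity)] at hq
    have hd2 : (2 : ℝ) ≤ d := by exact_mod_cast (show 2 ≤ d by omega)
    calc ‖a d * μ (k / d)‖ ≤ C * (d : ℝ) ^ M * (B * ((k : ℝ) / d) ^ (M + N + 2)) := by
          rw [norm_mul]; gcongr; exact hC d hd0.ne'
      _ = B * C * ((d : ℝ) ^ M * ((k : ℝ) / d) ^ (M + N + 2)) := by ring
      _ ≤ _ := by
          rw [mul_assoc (B * C)]
          exact mul_le_mul_of_nonneg_left (pow_mul_div_pow_le hd2 k.cast_nonneg M N)
            (by positivity)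
  calc ‖μ k‖ = B * ‖∑ d ∈ k.divisors.erase 1, a d * μ (k / d)‖ := by
        rw [h.eq_neg_mul_sum hk hk1, norm_neg, norm_mul]
    _ ≤ B * ∑ d ∈ k.divisors.erase 1,
          B * C * ((k : ℝ) ^ (M + N + 2) / 2 ^ N) * ((d : ℝ) ^ 2)⁻¹ := by
        gcongr; exact (norm_sum_le _ _).trans (sum_le_sum hterm)
    _ ≤ B * (B * C * ((k : ℝ) ^ (M + N + 2) / 2 ^ N) * 2) := by
        rw [← mul_sum]; gcongr; exact sum_inv_sq_le_two _
    _ = B * (k : ℝ) ^ (M + N + 2) * (2 * B * C / 2 ^ N) := by ring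
    _ ≤ B * (k : ℝ) ^ (M + N + 2) := by
        exact mul_le_of_le_one_right (by positivity) ((div_le_one (by positivity)).mpr hN.le)

end IsDirichletInverse

theorem polynomiallyBounded_iff_exists_tendsto_sum_Icc (f : ℕ → ℂ) :
    PolynomiallyBounded f ↔
      ∃ s L : ℂ, Tendsto (fun n ↦ ∑ k ∈ Icc 1 n, f k * (k : ℂ) ^ (-s)) atTop (𝓝 L) := by
  refine ⟨fun hf ↦ ?_, fun ⟨_, _, h⟩ ↦ .of_tendsto_sum_Icc h⟩
  obtain ⟨s, hs⟩ := hf.lSeriesSummable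
  exact ⟨s, _, hs.tendsto_sum_Icc⟩

theorem finite_abscissa_iff_inverse_finite_abscissa_general (a : ℕ → ℂ) (μ : ℕ → ℂ)
    (hμ : ∀ k : ℕ, 1 ≤ k →
      (∑ d ∈ k.divisors, a d * μ (k / d)) = if k = 1 then 1 else 0) :
    (∃ s : ℂ, ∃ L : ℂ,
        Tendsto (fun n => ∑ k ∈ Finset.Icc 1 n, a k * (k : ℂ) ^ (-s)) atTop (𝓝 L)) ↔
    (∃ s : ℂ, ∃ L : ℂ,
        Tendsto (fun n => ∑ k ∈ Finset.Icc 1 n, μ k * (k : ℂ) ^ (-s)) atTop (𝓝 L)) := by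
  have hinv : IsDirichletInverse a μ := hμ
  rw [← polynomiallyBounded_iff_exists_tendsto_sum_Icc,
    ← polynomiallyBounded_iff_exists_tendsto_sum_Icc]
  exact ⟨hinv.polynomiallyBounded, hinv.symm.polynomiallyBounded⟩

theorem finite_abscissa_iff_inverse_finite_abscissa (a : ℕ → ℂ) (ha0 : a 0 = 0)
    (ha1 : a 1 ≠ 0) (μ : ℕ → ℂ) (hμ0 : μ 0 = 0)
    (hμ : ∀ k : ℕ, 1 ≤ k →
      (∑ d ∈ k.divisors, a d * μ (k / d)) = if k = 1 then 1 else 0) :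
    (∃ s : ℂ, ∃ L : ℂ,
        Tendsto (fun n => ∑ k ∈ Finset.Icc 1 n, a k * (k : ℂ) ^ (-s)) atTop (𝓝 L)) ↔
    (∃ s : ℂ, ∃ L : ℂ,
        Tendsto (fun n => ∑ k ∈ Finset.Icc 1 n, μ k * (k : ℂ) ^ (-s)) atTop (𝓝 L)) :=
  finite_abscissa_iff_inverse_finite_abscissa_general a μ hμ
end

section
/- Define \psi_1(t) = 1 and \psi_n(t) = n^{1/2 - it} - (n-1)^{1/2 - it} for integers n \ge 2 and real t. Then (1/(2\pi)) \int_{-\infty}^{\infty} \psi_n(t) \overline{\psi_m(t)} \, dt/(1/4 + t^2) = \delta_{nm} for all n, m \in \mathbb{N}. -/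
/-!
Write `eₓ(t) = x^{1/2 - it}`, so that `ψₙ = eₙ - eₙ₋₁` for `n ≥ 1`, with `e₀ = 0`.
Fourier inversion for the two-sided exponential `e^{-a|v|}`, whose Fourier transform is
`2a / (a² + 4π²ξ²)`, gives `∫ e^{ixt} / (a² + t²) dt = (π / a) e^{-a|x|}`. With `a = 1/2` this turns
the weighted inner product of `eₓ` and `e_y` into `2π √(xy) e^{-|log x - log y|/2} = 2π min(x, y)`.
So the `eₙ` have the covariance `min` of Brownian motion, and their unit increments `ψₙ` are
orthonormal: `min(n,m) - min(n,m-1) - min(n-1,m) + min(n-1,m-1) = δₙₘ`.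
-/

open MeasureTheory

/-- Lubinsky's Dirichlet orthonormal polynomials:
`ψ₁(t) = 1`, `ψₙ(t) = n^{1/2-it} - (n-1)^{1/2-it}` for `n ≥ 2`. -/
noncomputable def lubinskyPsi (n : ℕ) (t : ℝ) : ℂ :=
  if n ≤ 1 then 1
  else (n : ℂ) ^ ((1/2 : ℂ) - Complex.I * t) - ((n : ℂ) - 1) ^ ((1/2 : ℂ) - Complex.I * t)

open Real Complex Set FourierTransform ComplexConjugate

section LaplaceKernel

variable {a : ℝ}

lemma integrableOn_cexp_neg_mul_abs_Iic (ha : 0 < a) (ξ : ℝ) :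
    IntegrableOn (fun v : ℝ => cexp (-a * |v| + ξ * v * I)) (Iic 0) := by
  refine (integrableOn_exp_mul_complex_Iic (a := a + ξ * I) (by simpa using ha) 0).congr_fun
    (fun v (hv : v ≤ 0) => ?_) measurableSet_Iic
  rw [abs_of_nonpos hv]
  push_cast
  ring_nf

lemma integrableOn_cexp_neg_mul_abs_Ioi (ha : 0 < a) (ξ : ℝ) :
    IntegrableOn (fun v : ℝ => cexp (-a * |v| + ξ * v * I)) (Ioi 0) := by
  refine (integrableOn_exp_mul_complex_Ioi (a := -a + ξ * I) (by simpa using ha) 0).congr_fun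
    (fun v (hv : 0 < v) => ?_) measurableSet_Ioi
  rw [abs_of_pos hv]
  ring_nf

lemma integrable_cexp_neg_mul_abs (ha : 0 < a) (ξ : ℝ) :
    Integrable fun v : ℝ => cexp (-a * |v| + ξ * v * I) := by
  rw [← integrableOn_univ, ← Iic_union_Ioi (a := (0 : ℝ))]
  exact (integrableOn_cexp_neg_mul_abs_Iic ha ξ).union (integrableOn_cexp_neg_mul_abs_Ioi ha ξ)

theorem integral_cexp_neg_mul_abs (ha : 0 < a) (ξ : ℝ) :
    ∫ v : ℝ, cexp (-a * |v| + ξ * v * I) = 2 * a / (a ^ 2 + ξ ^ 2) := by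
  rw [← intervalIntegral.integral_Iic_add_Ioi (integrableOn_cexp_neg_mul_abs_Iic ha ξ)
    (integrableOn_cexp_neg_mul_abs_Ioi ha ξ)]
  have hIic : ∫ v in Iic (0 : ℝ), cexp (-a * |v| + ξ * v * I) = 1 / (a + ξ * I) := by
    have h := integral_exp_mul_complex_Iic (a := a + ξ * I) (by simpa using ha) 0
    simp only [ofReal_zero, mul_zero, Complex.exp_zero] at h
    rw [← h]
    refine setIntegral_congr_fun measurableSet_Iic fun v (hv : v ≤ 0) => ?_
    rw [abs_of_nonpos hv]
    push_cast
    ring_nf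
  have hIoi : ∫ v in Ioi (0 : ℝ), cexp (-a * |v| + ξ * v * I) = 1 / (a - ξ * I) := by
    have h := integral_exp_mul_complex_Ioi (a := -a + ξ * I) (by simpa using ha) 0
    rw [show (1 : ℂ) / (a - ξ * I) = -1 / (-a + ξ * I) by
      rw [neg_add_eq_sub, ← neg_sub, div_neg, neg_div]]
    simp only [ofReal_zero, mul_zero, Complex.exp_zero] at h
    rw [← h]
    refine setIntegral_congr_fun measurableSet_Ioi fun v (hv : 0 < v) => ?_
    rw [abs_of_pos hv]
    ring_nf
  have h₁ : (a : ℂ) + ξ * I ≠ 0 := fun h => by simpa [ha.ne'] using congrArg re h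
  have h₂ : (a : ℂ) - ξ * I ≠ 0 := fun h => by simpa [ha.ne'] using congrArg re h
  have hprod : ((a : ℂ) + ξ * I) * (a - ξ * I) = a ^ 2 + ξ ^ 2 := by
    ring_nf
    rw [I_sq]
    ring
  rw [hIic, hIoi, div_add_div _ _ h₁ h₂, hprod]
  ring

lemma fourier_exp_neg_mul_abs (ha : 0 < a) (ξ : ℝ) :
    𝓕 (fun v : ℝ => (rexp (-a * |v|) : ℂ)) ξ = 2 * a / (a ^ 2 + (2 * π * ξ) ^ 2) := by
  rw [Real.fourier_real_eq_integral_exp_smul]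
  calc _ = ∫ v : ℝ, cexp (-a * |v| + ↑(-2 * π * ξ) * v * I) := by
        congr 1 with v
        rw [smul_eq_mul, ofReal_exp, ← Complex.exp_add]
        push_cast
        ring_nf
    _ = _ := by
        rw [integral_cexp_neg_mul_abs ha]
        push_cast
        ring

lemma integrable_inv_sq_add_sq (ha : a ≠ 0) : Integrable fun t : ℝ => (a ^ 2 + t ^ 2)⁻¹ := by
  refine ((integrable_inv_one_add_sq.comp_mul_left' (inv_ne_zero ha)).const_mul (a ^ 2)⁻¹).congr
    (.of_forall fun t => ?_)
  field_simp

lemma integrable_cexp_mul_I_div_sq_add_sq (ha : a ≠ 0) (x : ℝ) :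
    Integrable fun t : ℝ => cexp (x * t * I) / (a ^ 2 + t ^ 2) := by
  refine ((integrable_inv_sq_add_sq ha).ofReal.bdd_mul (c := 1)
    (by fun_prop : Continuous fun t : ℝ => cexp (x * t * I)).aestronglyMeasurable
    (.of_forall fun t => ?_)).congr (.of_forall fun t => ?_)
  · rw [← ofReal_mul, norm_exp_ofReal_mul_I]
  · simp [div_eq_mul_inv]

theorem integral_cexp_mul_I_div_sq_add_sq (ha : 0 < a) (x : ℝ) :
    ∫ t : ℝ, cexp (x * t * I) / (a ^ 2 + t ^ 2) = π / a * rexp (-a * |x|) := by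
  set g : ℝ → ℂ := fun v => (rexp (-a * |v|) : ℂ)
  have hg : Integrable g := by simpa [g, ofReal_exp] using integrable_cexp_neg_mul_abs ha 0
  have hFg : 𝓕 g = fun ξ => ((2 * a * (a ^ 2 + (2 * π * ξ) ^ 2)⁻¹ : ℝ) : ℂ) := by
    ext ξ
    rw [fourier_exp_neg_mul_abs ha ξ]
    push_cast
    ring
  have hFg_int : Integrable (𝓕 g) := by
    rw [hFg]
    exact (((integrable_inv_sq_add_sq ha.ne').comp_mul_left' (by positivity)).const_mul
      (2 * a)).ofReal
  -- Fourier inversion at `x`, then the substitution `t = 2πv` in the inverse transform.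
  have hinv := hg.fourierInv_fourier_eq hFg_int (by fun_prop : Continuous g).continuousAt (v := x)
  rw [Real.fourierInv_eq_fourier_neg, Real.fourier_real_eq_integral_exp_smul, hFg] at hinv
  set φ : ℝ → ℂ := fun t => cexp (x * t * I) / (a ^ 2 + t ^ 2)
  have hπ : 0 < 2 * π := by positivity
  have hscale : (rexp (-a * |x|) : ℂ) = a / π * ∫ t, φ t := by
    calc _ = g x := rfl
      _ = _ := hinv.symm
      _ = ∫ v : ℝ, (2 * a : ℂ) * φ (2 * π * v) := by
          congr 1 with v
          simp only [φ, smul_eq_mul]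
          push_cast
          ring_nf
      _ = _ := by
          rw [integral_const_mul, Measure.integral_comp_mul_left φ, abs_of_pos (inv_pos.2 hπ),
            real_smul]
          push_cast
          field_simp
  have ha' : (a : ℂ) ≠ 0 := ofReal_ne_zero.2 ha.ne'
  rw [hscale]
  field_simp

end LaplaceKernel

noncomputable def dirichletMonomial (x t : ℝ) : ℂ := (x : ℂ) ^ ((1/2 : ℂ) - I * t)

section DirichletMonomial

variable {x y : ℝ}

lemma half_sub_I_mul_ne_zero (t : ℝ) : (1/2 : ℂ) - I * t ≠ 0 :=
  fun h => by simpa using congrArg re h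

lemma quarter_add_sq (t : ℝ) : ((1/4 : ℝ) : ℂ) + (t : ℂ) ^ 2 = ((1/2 : ℝ) : ℂ) ^ 2 + t ^ 2 := by
  norm_num

@[simp] lemma dirichletMonomial_zero (t : ℝ) : dirichletMonomial 0 t = 0 := by
  rw [dirichletMonomial, ofReal_zero, zero_cpow (half_sub_I_mul_ne_zero t)]

@[simp] lemma dirichletMonomial_one (t : ℝ) : dirichletMonomial 1 t = 1 := by
  simp [dirichletMonomial]

lemma dirichletMonomial_mul_conj (hx : 0 < x) (hy : 0 < y) (t : ℝ) :
    dirichletMonomial x t * conj (dirichletMonomial y t) =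
      rexp ((Real.log x + Real.log y) / 2) * cexp ((Real.log y - Real.log x : ℝ) * t * I) := by
  simp only [dirichletMonomial, cpow_def_of_ne_zero (ofReal_ne_zero.2 hx.ne'),
    cpow_def_of_ne_zero (ofReal_ne_zero.2 hy.ne'), ← ofReal_log hx.le, ← ofReal_log hy.le,
    ← Complex.exp_conj, ofReal_exp, ← Complex.exp_add, map_mul, map_sub, map_div₀, map_one,
    map_ofNat, conj_ofReal, conj_I]
  congr 1
  push_cast
  ring

lemma integrable_dirichletMonomial_mul_conj (hx : 0 ≤ x) (hy : 0 ≤ y) :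
    Integrable fun t : ℝ =>
      dirichletMonomial x t * conj (dirichletMonomial y t) / ((1/4 : ℝ) + t ^ 2) := by
  rcases hx.eq_or_lt with rfl | hx
  · simp
  rcases hy.eq_or_lt with rfl | hy
  · simp
  simp_rw [dirichletMonomial_mul_conj hx hy, mul_div_assoc, quarter_add_sq]
  exact (integrable_cexp_mul_I_div_sq_add_sq (by norm_num) _).const_mul _

theorem integral_dirichletMonomial_mul_conj (hx : 0 ≤ x) (hy : 0 ≤ y) :
    ∫ t : ℝ, dirichletMonomial x t * conj (dirichletMonomial y t) / ((1/4 : ℝ) + t ^ 2) =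
      2 * π * min x y := by
  rcases hx.eq_or_lt with rfl | hx
  · simp [hy]
  rcases hy.eq_or_lt with rfl | hy
  · simp [hx.le]
  simp_rw [dirichletMonomial_mul_conj hx hy, mul_div_assoc, quarter_add_sq]
  rw [integral_const_mul, integral_cexp_mul_I_div_sq_add_sq (by norm_num)]
  have hmin : rexp ((Real.log x + Real.log y) / 2) * rexp (-(1/2) * |Real.log y - Real.log x|) =
      min x y := by
    rw [← Real.exp_add, ← Real.exp_log hx, ← Real.exp_log hy, ← Real.exp_monotone.map_min,
      Real.log_exp, Real.log_exp, (inf_eq_half_smul_add_sub_abs_sub' ℝ _ _ : min _ _ = _),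
      smul_eq_mul]
    ring_nf
  rw [← hmin]
  push_cast
  ring

end DirichletMonomial

lemma integral_sub_mul_conj_sub_div {α 𝕜 : Type*} [MeasurableSpace α] {μ : Measure α} [RCLike 𝕜]
    {f₁ f₂ g₁ g₂ w : α → 𝕜}
    (h₁₁ : Integrable (fun a => f₁ a * conj (g₁ a) / w a) μ)
    (h₁₂ : Integrable (fun a => f₁ a * conj (g₂ a) / w a) μ)
    (h₂₁ : Integrable (fun a => f₂ a * conj (g₁ a) / w a) μ)
    (h₂₂ : Integrable (fun a => f₂ a * conj (g₂ a) / w a) μ) :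
    ∫ a, (f₁ a - f₂ a) * conj (g₁ a - g₂ a) / w a ∂μ =
      (∫ a, f₁ a * conj (g₁ a) / w a ∂μ) - (∫ a, f₁ a * conj (g₂ a) / w a ∂μ) -
        (∫ a, f₂ a * conj (g₁ a) / w a ∂μ) + ∫ a, f₂ a * conj (g₂ a) / w a ∂μ := by
  have hexpand : ∀ a, (f₁ a - f₂ a) * conj (g₁ a - g₂ a) / w a =
      (f₁ a * conj (g₁ a) / w a - f₁ a * conj (g₂ a) / w a) -
        (f₂ a * conj (g₁ a) / w a - f₂ a * conj (g₂ a) / w a) := fun a => by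
    rw [map_sub]
    ring
  simp_rw [hexpand]
  rw [integral_sub (f := fun a => _ - _) (g := fun a => _ - _) (h₁₁.sub h₁₂) (h₂₁.sub h₂₂),
    integral_sub h₁₁ h₁₂, integral_sub h₂₁ h₂₂]
  ring

lemma min_sub_min_sub_min_add_min (n m : ℤ) :
    min n m - min n (m - 1) - min (n - 1) m + min (n - 1) (m - 1) = if n = m then 1 else 0 := by
  split_ifs <;> omega

lemma lubinskyPsi_eq_sub {n : ℕ} (hn : 1 ≤ n) (t : ℝ) :
    lubinskyPsi n t = dirichletMonomial n t - dirichletMonomial ((n : ℝ) - 1) t := by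
  rw [lubinskyPsi]
  split_ifs with h
  · simp [show n = 1 by omega]
  · simp [dirichletMonomial]

theorem lubinskyPsi_orthonormal (n m : ℕ) (hn : 1 ≤ n) (hm : 1 ≤ m) :
    (1 / (2 * Real.pi) : ℂ) *
        ∫ t : ℝ, lubinskyPsi n t * (starRingEnd ℂ) (lubinskyPsi m t) / ((1/4 : ℝ) + t ^ 2) =
      if n = m then 1 else 0 := by
  have hn₀ : (0 : ℝ) ≤ n := n.cast_nonneg
  have hm₀ : (0 : ℝ) ≤ m := m.cast_nonneg
  have hn₁ : (0 : ℝ) ≤ n - 1 := sub_nonneg.2 (Nat.one_le_cast.2 hn)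
  have hm₁ : (0 : ℝ) ≤ m - 1 := sub_nonneg.2 (Nat.one_le_cast.2 hm)
  simp_rw [lubinskyPsi_eq_sub hn, lubinskyPsi_eq_sub hm]
  rw [integral_sub_mul_conj_sub_div (integrable_dirichletMonomial_mul_conj hn₀ hm₀)
    (integrable_dirichletMonomial_mul_conj hn₀ hm₁) (integrable_dirichletMonomial_mul_conj hn₁ hm₀)
    (integrable_dirichletMonomial_mul_conj hn₁ hm₁), integral_dirichletMonomial_mul_conj hn₀ hm₀,
    integral_dirichletMonomial_mul_conj hn₀ hm₁, integral_dirichletMonomial_mul_conj hn₁ hm₀,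
    integral_dirichletMonomial_mul_conj hn₁ hm₁]
  have hδ : min (n : ℝ) m - min (n : ℝ) (m - 1) - min ((n : ℝ) - 1) m + min ((n : ℝ) - 1) (m - 1) =
      if n = m then 1 else 0 := by
    exact_mod_cast min_sub_min_sub_min_add_min n m
  have hπ : (π : ℂ) ≠ 0 := ofReal_ne_zero.2 pi_ne_zero
  calc _ = (((min (n : ℝ) m - min (n : ℝ) (m - 1) - min ((n : ℝ) - 1) m +
        min ((n : ℝ) - 1) (m - 1) : ℝ)) : ℂ) := by
        push_cast
        field_simp
    _ = _ := by
        rw [hδ]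
        split_ifs <;> simp
end

section
/- Let \psi_n be the Lubinsky Dirichlet orthonormal polynomials (\psi_1 = 1, \psi_n(t) = n^{1/2-it} - (n-1)^{1/2-it}) and K_n(u,v) = \sum_{k=1}^n \psi_k(u) \overline{\psi_k(v)}. Then for each fixed real u, K_n(u,u) = |1/2 + iu|^2 \log n \, (1 + o(1)) as n \to \infty, uniformly for u in compact subsets of \mathbb{R}. -/
/-!
Write `s = 1/2 - it`, so that `ψ_{k+1}(t) = (k + 1)^s - k^s` for `k ≥ 1`. A second-order Taylor
bound for `x ↦ x^s` on `[k, k + 1]` gives `ψ_{k+1}(t) = s k^(s-1) + O(k^(-3/2))`, and since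
`Re s = 1/2` this yields `|ψ_{k+1}(t)|² = |s|²/k + O(k⁻²)`, where `|s|² = 1/4 + t²` and the
constant depends continuously on `t`. Summing, `K_n(t,t) = (1/4 + t²) H_{n-1} + O(1)`, and
`H_{n-1} = log n + O(1)`. A bound that is continuous in `t` is uniform on compact sets, and
dividing by `log n` gives the uniform limit.
-/

open Filter Topology

/-- The Lubinsky reproducing kernel `Kₙ(u,v) = ∑_{k=1}^n ψₖ(u) conj (ψₖ(v))`. -/
noncomputable def lubinskyKernel (n : ℕ) (u v : ℝ) : ℂ :=
  ∑ k ∈ Finset.Icc 1 n, lubinskyPsi k u * (starRingEnd ℂ) (lubinskyPsi k v)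

open Set Finset

theorem norm_sub_sub_smul_le_of_norm_deriv2_le {E : Type*} [NormedAddCommGroup E]
    [NormedSpace ℝ E] {f f' f'' : ℝ → E} {a b C : ℝ} (hab : a ≤ b)
    (hf : ∀ x ∈ Icc a b, HasDerivAt f (f' x) x) (hf' : ∀ x ∈ Icc a b, HasDerivAt f' (f'' x) x)
    (bound : ∀ x ∈ Icc a b, ‖f'' x‖ ≤ C) :
    ‖f b - f a - (b - a) • f' a‖ ≤ C * (b - a) ^ 2 := by
  have hC : 0 ≤ C := (norm_nonneg _).trans (bound a (left_mem_Icc.2 hab))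
  have hf'_lip : ∀ x ∈ Ico a b, ‖f' x - f' a‖ ≤ C * (b - a) := fun x hx =>
    (norm_image_sub_le_of_norm_deriv_le_segment' (fun y hy => (hf' y hy).hasDerivWithinAt)
      (fun y hy => bound y (Ico_subset_Icc_self hy)) x (Ico_subset_Icc_self hx)).trans
      (by gcongr; exact hx.2.le)
  have key := norm_image_sub_le_of_norm_deriv_le_segment'
    (f := fun x => f x - (x - a) • f' a) (f' := fun x => f' x - f' a)
    (fun x hx =>
      (((hf x hx).sub (((hasDerivAt_id x).sub_const a).smul_const (f' a))).congr_deriv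
        (by simp)).hasDerivWithinAt)
    hf'_lip b (right_mem_Icc.2 hab)
  simpa [sub_right_comm, sq, mul_assoc] using key

theorem hasDerivAt_ofReal_cpow_const_of_pos (c : ℂ) {x : ℝ} (hx : 0 < x) :
    HasDerivAt (fun y : ℝ => (y : ℂ) ^ c) (c * (x : ℂ) ^ (c - 1)) x := by
  simpa using ((hasDerivAt_id (x : ℂ)).cpow_const (by simpa using hx)).comp_ofReal

theorem norm_cpow_add_one_sub_cpow_sub_le {s : ℂ} (hs : s.re ≤ 2) {x : ℝ} (hx : 0 < x) :
    ‖((x : ℂ) + 1) ^ s - (x : ℂ) ^ s - s * (x : ℂ) ^ (s - 1)‖ ≤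
      ‖s‖ * ‖s - 1‖ * x ^ (s.re - 2) := by
  have key := norm_sub_sub_smul_le_of_norm_deriv2_le (f := fun y : ℝ => (y : ℂ) ^ s)
    (a := x) (b := x + 1) (C := ‖s‖ * ‖s - 1‖ * x ^ (s.re - 2)) (by linarith)
    (fun y hy => hasDerivAt_ofReal_cpow_const_of_pos s (hx.trans_le hy.1))
    (fun y hy => (hasDerivAt_ofReal_cpow_const_of_pos (s - 1) (hx.trans_le hy.1)).const_mul s)
    (fun y hy => by
      rw [norm_mul, norm_mul, Complex.norm_cpow_eq_rpow_re_of_pos (hx.trans_le hy.1)]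
      simp only [Complex.sub_re, Complex.one_re]
      rw [← mul_assoc, sub_sub, one_add_one_eq_two]
      exact mul_le_mul_of_nonneg_left (Real.rpow_le_rpow_of_nonpos hx hy.1 (sub_nonpos.2 hs))
        (by positivity))
  simpa using key

theorem abs_norm_sq_sub_norm_sq_le {E : Type*} [SeminormedAddCommGroup E] (a b : E) :
    |‖a‖ ^ 2 - ‖b‖ ^ 2| ≤ ‖a - b‖ * (‖a - b‖ + 2 * ‖b‖) := by
  have h₁ : |‖a‖ - ‖b‖| ≤ ‖a - b‖ := abs_norm_sub_norm_le a b
  have h₂ : ‖a‖ + ‖b‖ ≤ ‖a - b‖ + 2 * ‖b‖ := by linarith [norm_le_norm_sub_add a b]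
  rw [sq_sub_sq, abs_mul, abs_of_nonneg (by positivity), mul_comm]
  exact mul_le_mul h₁ h₂ (by positivity) (norm_nonneg _)

/-- On the critical line the main term `s x^(s-1)` of `(x + 1)^s - x^s` has squared norm
exactly `‖s‖² / x`. -/
theorem abs_norm_cpow_add_one_sub_cpow_sq_sub_le {s : ℂ} (hs : s.re = 1 / 2) {x : ℝ}
    (hx : 1 ≤ x) :
    |‖((x : ℂ) + 1) ^ s - (x : ℂ) ^ s‖ ^ 2 - ‖s‖ ^ 2 / x| ≤
      ‖s‖ * ‖s - 1‖ * (‖s‖ * ‖s - 1‖ + 2 * ‖s‖) / x ^ 2 := by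
  have hx0 : 0 < x := one_pos.trans_le hx
  set r := x ^ (-(1 / 2) : ℝ) with hr
  have hr0 : 0 ≤ r := by positivity
  have hr1 : r ≤ 1 := Real.rpow_le_one_of_one_le_of_nonpos hx (by norm_num)
  have hr_sq : r ^ 2 = 1 / x := by
    rw [hr, ← Real.rpow_mul_natCast hx0.le]; norm_num [Real.rpow_neg_one]
  have hr_cube : x ^ (s.re - 2) = r ^ 3 := by
    rw [hr, ← Real.rpow_mul_natCast hx0.le, hs]; norm_num
  set b := s * (x : ℂ) ^ (s - 1)
  have hb : ‖b‖ = ‖s‖ * r := by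
    rw [norm_mul, Complex.norm_cpow_eq_rpow_re_of_pos hx0, Complex.sub_re, hs, hr]; norm_num
  set A := ‖s‖ * ‖s - 1‖
  have hd : ‖((x : ℂ) + 1) ^ s - (x : ℂ) ^ s - b‖ ≤ A * r ^ 3 :=
    hr_cube ▸ norm_cpow_add_one_sub_cpow_sub_le (by rw [hs]; norm_num) hx0
  have key := abs_norm_sq_sub_norm_sq_le (((x : ℂ) + 1) ^ s - (x : ℂ) ^ s) b
  rw [hb, mul_pow, hr_sq, mul_one_div] at key
  have hr64 : A ^ 2 * r ^ 6 ≤ A ^ 2 * r ^ 4 :=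
    mul_le_mul_of_nonneg_left (pow_le_pow_of_le_one hr0 hr1 (by norm_num)) (sq_nonneg A)
  calc _ ≤ _ := key
    _ ≤ A * r ^ 3 * (A * r ^ 3 + 2 * (‖s‖ * r)) := by gcongr
    _ ≤ A * (A + 2 * ‖s‖) * (r ^ 2) ^ 2 := by nlinarith
    _ = A * (A + 2 * ‖s‖) / x ^ 2 := by rw [hr_sq]; ring

theorem abs_sum_norm_cpow_succ_sub_cpow_sq_sub_harmonic_le {s : ℂ} (hs : s.re = 1 / 2)
    (m : ℕ) :
    |∑ i ∈ range m, ‖((i : ℂ) + 2) ^ s - ((i : ℂ) + 1) ^ s‖ ^ 2 - ‖s‖ ^ 2 * harmonic m| ≤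
      2 * (‖s‖ * ‖s - 1‖ * (‖s‖ * ‖s - 1‖ + 2 * ‖s‖)) := by
  set c := ‖s‖ * ‖s - 1‖ * (‖s‖ * ‖s - 1‖ + 2 * ‖s‖)
  have hterm (i : ℕ) :
      |‖((i : ℂ) + 2) ^ s - ((i : ℂ) + 1) ^ s‖ ^ 2 - ‖s‖ ^ 2 / ((i : ℝ) + 1)| ≤
        c / ((i : ℝ) + 1) ^ 2 := by
    have h := abs_norm_cpow_add_one_sub_cpow_sq_sub_le hs (x := (i : ℝ) + 1) (by simp)
    push_cast at h
    rwa [add_assoc, one_add_one_eq_two] at h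
  have hzeta : ∑ i ∈ range m, (((i : ℝ) + 1) ^ 2)⁻¹ ≤ 2 := by
    have h := sum_Ioo_inv_sq_le (α := ℝ) 0 (m + 1)
    rw [← Finset.Ico_add_one_left_eq_Ioo, Finset.sum_Ico_eq_sum_range] at h
    simpa [add_comm] using h
  have hharm : ‖s‖ ^ 2 * (harmonic m : ℝ) = ∑ i ∈ range m, ‖s‖ ^ 2 / ((i : ℝ) + 1) := by
    simp [harmonic, mul_sum, div_eq_mul_inv]
  have hc : 0 ≤ c := by positivity
  calc _ = |∑ i ∈ range m, (‖((i : ℂ) + 2) ^ s - ((i : ℂ) + 1) ^ s‖ ^ 2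
          - ‖s‖ ^ 2 / ((i : ℝ) + 1))| := by rw [hharm, sum_sub_distrib]
    _ ≤ ∑ i ∈ range m, c / ((i : ℝ) + 1) ^ 2 :=
      (abs_sum_le_sum_abs _ _).trans (sum_le_sum fun i _ => hterm i)
    _ ≤ 2 * c := by simp_rw [div_eq_mul_inv]; rw [← mul_sum, mul_comm]; gcongr

theorem abs_harmonic_sub_log_succ_le_one (m : ℕ) : |(harmonic m : ℝ) - Real.log (m + 1)| ≤ 1 := by
  have hlower := log_add_one_le_harmonic m
  have hupper := harmonic_le_one_add_log m
  have hmono : Real.log m ≤ Real.log (m + 1) := by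
    rcases m.eq_zero_or_pos with rfl | hm
    · simp
    · exact Real.log_le_log (by positivity) (by linarith)
  push_cast at hlower
  rw [abs_le]; constructor <;> linarith

theorem tendstoUniformlyOn_div_log_of_norm_sub_le {α 𝕜 : Type*} [RCLike 𝕜] {F : ℕ → α → 𝕜}
    {g : α → 𝕜} {s : Set α} {D : ℝ}
    (h : ∀ᶠ n in atTop, ∀ x ∈ s, ‖F n x - Real.log n * g x‖ ≤ D) :
    TendstoUniformlyOn (fun n x => F n x / Real.log n) g atTop s := by
  rw [Metric.tendstoUniformlyOn_iff]
  intro ε hε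
  have hlog : Tendsto (fun n : ℕ => Real.log n) atTop atTop :=
    Real.tendsto_log_atTop.comp tendsto_natCast_atTop_atTop
  filter_upwards [h, (hlog.const_div_atTop D).eventually_lt_const hε,
    hlog.eventually_gt_atTop 0] with n hn hDn hlog_pos x hx
  have hlog0 : (Real.log n : 𝕜) ≠ 0 := by exact_mod_cast hlog_pos.ne'
  calc dist (g x) (F n x / Real.log n) = ‖F n x - Real.log n * g x‖ / Real.log n := by
        rw [dist_comm, dist_eq_norm, div_sub' hlog0, norm_div, RCLike.norm_ofReal,
          abs_of_pos hlog_pos]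
    _ ≤ D / Real.log n := by gcongr; exact hn x hx
    _ < ε := hDn

noncomputable def lubinskyExponent (t : ℝ) : ℂ := 1 / 2 - Complex.I * t

theorem lubinskyExponent_re (t : ℝ) : (lubinskyExponent t).re = 1 / 2 := by
  simp [lubinskyExponent]

theorem norm_lubinskyExponent_sq (t : ℝ) : ‖lubinskyExponent t‖ ^ 2 = 1 / 4 + t ^ 2 := by
  have h : lubinskyExponent t = ((1 / 2 : ℝ) : ℂ) + ((-t : ℝ) : ℂ) * Complex.I := by
    push_cast [lubinskyExponent]; ring
  rw [Complex.sq_norm, h, Complex.normSq_add_mul_I]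
  ring

theorem lubinskyPsi_one (t : ℝ) : lubinskyPsi 1 t = 1 := by
  simp [lubinskyPsi]

theorem lubinskyPsi_add_two (i : ℕ) (t : ℝ) :
    lubinskyPsi (i + 2) t =
      ((i : ℂ) + 2) ^ lubinskyExponent t - ((i : ℂ) + 1) ^ lubinskyExponent t := by
  rw [lubinskyPsi, if_neg (by omega), lubinskyExponent]
  push_cast
  ring_nf

theorem lubinskyKernel_self (n : ℕ) (t : ℝ) :
    lubinskyKernel n t t = ((∑ k ∈ Icc 1 n, ‖lubinskyPsi k t‖ ^ 2 : ℝ) : ℂ) := by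
  simp [lubinskyKernel, Complex.mul_conj']

theorem sum_Icc_norm_lubinskyPsi_sq (m : ℕ) (t : ℝ) :
    ∑ k ∈ Icc 1 (m + 1), ‖lubinskyPsi k t‖ ^ 2 = 1 + ∑ i ∈ range m,
      ‖((i : ℂ) + 2) ^ lubinskyExponent t - ((i : ℂ) + 1) ^ lubinskyExponent t‖ ^ 2 := by
  rw [← Finset.Ico_add_one_right_eq_Icc, sum_Ico_eq_sum_range, Nat.add_sub_cancel,
    sum_range_succ', add_comm]
  simp [lubinskyPsi_one, ← lubinskyPsi_add_two, add_comm, add_left_comm]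

theorem exists_continuous_bound_norm_lubinskyKernel_self_sub_log :
    ∃ B : ℝ → ℝ, Continuous B ∧ ∀ (n : ℕ) (t : ℝ),
      ‖lubinskyKernel n t t - Real.log n * ((1 / 4 + t ^ 2 : ℝ) : ℂ)‖ ≤ B t := by
  refine ⟨fun t => 1 + ‖lubinskyExponent t‖ ^ 2 + 2 * (‖lubinskyExponent t‖ *
    ‖lubinskyExponent t - 1‖ * (‖lubinskyExponent t‖ * ‖lubinskyExponent t - 1‖ +
      2 * ‖lubinskyExponent t‖)), by unfold lubinskyExponent; fun_prop, fun n t => ?_⟩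
  rcases n with _ | m
  · simp only [lubinskyKernel, Finset.Icc_eq_empty_of_lt zero_lt_one, sum_empty, Nat.cast_zero,
      Real.log_zero, Complex.ofReal_zero, zero_mul, sub_self, norm_zero]
    positivity
  have hsum := abs_sum_norm_cpow_succ_sub_cpow_sq_sub_harmonic_le (lubinskyExponent_re t) m
  have hharm := abs_harmonic_sub_log_succ_le_one m
  rw [lubinskyKernel_self, ← norm_lubinskyExponent_sq, ← Complex.ofReal_mul,
    ← Complex.ofReal_sub, Complex.norm_real, Real.norm_eq_abs, sum_Icc_norm_lubinskyPsi_sq]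
  set s := lubinskyExponent t
  set X := ∑ i ∈ range m, ‖((i : ℂ) + 2) ^ s - ((i : ℂ) + 1) ^ s‖ ^ 2
  set H : ℝ := (harmonic m : ℝ)
  have hlog : |‖s‖ ^ 2 * (H - Real.log (m + 1))| ≤ ‖s‖ ^ 2 := by
    rw [abs_mul, abs_of_nonneg (by positivity)]
    exact mul_le_of_le_one_right (by positivity) hharm
  push_cast
  calc _ = |1 + (X - ‖s‖ ^ 2 * H) + ‖s‖ ^ 2 * (H - Real.log (m + 1))| := by ring_nf
    _ ≤ |1| + |X - ‖s‖ ^ 2 * H| + |‖s‖ ^ 2 * (H - Real.log (m + 1))| := abs_add_three _ _ _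
    _ ≤ _ := by rw [abs_one]; linarith

theorem lubinskyKernel_diagonal_asymptotics (K : Set ℝ) (hK : IsCompact K) :
    TendstoUniformlyOn (fun (n : ℕ) (u : ℝ) => lubinskyKernel n u u / (Real.log n : ℂ))
      (fun u : ℝ => ((1/4 : ℝ) + u ^ 2 : ℝ)) atTop K := by
  obtain ⟨B, hB_cont, hB⟩ := exists_continuous_bound_norm_lubinskyKernel_self_sub_log
  obtain ⟨D, hD⟩ := hK.exists_bound_of_continuousOn hB_cont.continuousOn
  refine tendstoUniformlyOn_div_log_of_norm_sub_le (D := D) (Eventually.of_forall fun n u hu => ?_)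
  exact (hB n u).trans ((le_abs_self _).trans (hD u hu))
end

section
/- Let P(s) = \sum_{k=1}^m a_k k^{-s} be a Dirichlet polynomial with zeros contained in \Re(s) \le r, and let s with \Re(s) > r. Using the Hadamard factorization P(z) = z^q e^{a + bz} \prod_{\rho}(1 - z/\rho)e^{z/\rho} (with \sum_\rho |\rho|^{-2} < \infty), there exists a constant C > 0 such that |P(r + it)/P(r + \epsilon + it)| \le C for all t \in \mathbb{R} and all sufficiently small \epsilon > 0 (with r + it not a zero of P, interpreting the quotient by continuity). -/
/-!
Take `σ` so large that `‖P s‖ > ‖a 1‖ / 2` for `Re s ≥ σ`, and compare `P` at `r + it` and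
`r + ε + it` inside discs centred at `c = σ + it`. On the disc of radius `3R` around `c` the
polynomial is bounded independently of `t`, so a Jensen-type count bounds the number of zeros in
the disc of radius `R` uniformly in `t`. Dividing them out leaves a zero-free factor with uniform
upper and lower bounds, and Borel–Carathéodory, applied to a holomorphic logarithm of it, bounds
the ratio of its values uniformly. The remaining linear factors `‖z - ρ‖` can only grow as `z`
moves to the right, because every zero has `Re ρ ≤ r`.
-/

open Metric

theorem norm_le_of_forall_mem_sphere_norm_le {f : ℂ → ℂ} (hf : Differentiable ℂ f) {c z : ℂ}
    {R C : ℝ} (hR : 0 < R) (hC : ∀ w ∈ sphere c R, ‖f w‖ ≤ C) (hz : z ∈ closedBall c R) :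
    ‖f z‖ ≤ C :=
  Complex.norm_le_of_forall_mem_frontier_norm_le isBounded_ball hf.diffContOnCl
    (by rwa [frontier_ball c hR.ne']) (by rwa [closure_ball c hR.ne'])

theorem Differentiable.dslope {g : ℂ → ℂ} (hg : Differentiable ℂ g) (ρ : ℂ) :
    Differentiable ℂ (dslope g ρ) :=
  differentiableOn_univ.mp <|
    (Complex.differentiableOn_dslope Filter.univ_mem).mpr hg.differentiableOn

theorem eq_sub_mul_dslope_of_eq_zero {g : ℂ → ℂ} {ρ : ℂ} (hgρ : g ρ = 0) (z : ℂ) :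
    g z = (z - ρ) * dslope g ρ z := by
  simpa [hgρ] using (sub_smul_dslope g ρ z).symm

theorem norm_dslope_of_eq_zero {g : ℂ → ℂ} {ρ z : ℂ} (hgρ : g ρ = 0) (hz : z ≠ ρ) :
    ‖dslope g ρ z‖ = ‖g z‖ / ‖z - ρ‖ := by
  rw [eq_sub_mul_dslope_of_eq_zero hgρ z, norm_mul,
    mul_div_cancel_left₀ _ (norm_ne_zero_iff.mpr (sub_ne_zero.mpr hz))]

/-- Dividing out a zero `ρ ∈ closedBall c R` costs a factor at most `R` at `c` and gains a factor
at least `2 * R` on `sphere c (3 * R)`, so the exponent `n` drops by one with each zero. -/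
theorem exists_factor_zeros_closedBall {g : ℂ → ℂ} (hg : Differentiable ℂ g) {c : ℂ} {R β : ℝ}
    (hR : 0 < R) (hβ : 0 ≤ β) (hβc : β < ‖g c‖) {n : ℕ}
    (hbound : ∀ z ∈ sphere c (3 * R), ‖g z‖ ≤ 2 ^ n * β) :
    ∃ (Z : Multiset ℂ) (h : ℂ → ℂ), Differentiable ℂ h ∧ Multiset.card Z ≤ n ∧
      (∀ ρ ∈ Z, ρ ∈ closedBall c R ∧ g ρ = 0) ∧ (∀ z ∈ closedBall c R, h z ≠ 0) ∧
      ∀ z, g z = (Z.map (z - ·)).prod * h z := by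
  induction n generalizing g β with
  | zero =>
    have := norm_le_of_forall_mem_sphere_norm_le hg (by positivity) hbound
      (mem_closedBall_self (by positivity))
    rw [pow_zero, one_mul] at this
    exact absurd hβc this.not_gt
  | succ n ih =>
    by_cases hzero : ∀ z ∈ closedBall c R, g z ≠ 0
    · exact ⟨0, g, hg, Nat.zero_le _, by simp, hzero, by simp⟩
    push Not at hzero
    obtain ⟨ρ, hρ, hgρ⟩ := hzero
    have hcρ : c ≠ ρ := by
      rintro rfl
      exact (hβ.trans_lt hβc).ne' (by simp [hgρ])
    have hc : β / R < ‖dslope g ρ c‖ := by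
      have hcρR : ‖c - ρ‖ ≤ R := by rw [← dist_eq_norm, dist_comm]; exact hρ
      rw [norm_dslope_of_eq_zero hgρ hcρ]
      calc β / R < ‖g c‖ / R := by gcongr
        _ ≤ ‖g c‖ / ‖c - ρ‖ := by gcongr; exact norm_pos_iff.mpr (sub_ne_zero.mpr hcρ)
    have hsphere : ∀ z ∈ sphere c (3 * R), ‖dslope g ρ z‖ ≤ 2 ^ n * (β / R) := by
      intro z hz
      have hzρ : 2 * R ≤ ‖z - ρ‖ := by
        rw [← dist_eq_norm]
        linarith [dist_triangle z ρ c, mem_sphere.mp hz, mem_closedBall.mp hρ]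
      have hzρ' : z ≠ ρ := by
        rintro rfl
        rw [sub_self, norm_zero] at hzρ
        linarith
      rw [norm_dslope_of_eq_zero hgρ hzρ']
      calc ‖g z‖ / ‖z - ρ‖ ≤ 2 ^ (n + 1) * β / (2 * R) := by gcongr; exact hbound z hz
        _ = 2 ^ n * (β / R) := by field_simp; ring
    obtain ⟨Z, h, hh, hcard, hZ, hne, hgh⟩ := ih (hg.dslope ρ) (by positivity) hc hsphere
    refine ⟨ρ ::ₘ Z, h, hh, by simpa using hcard, ?_, hne, fun z => ?_⟩
    · intro ρ' hρ'
      rcases Multiset.mem_cons.mp hρ' with rfl | hρ'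
      · exact ⟨hρ, hgρ⟩
      · rw [eq_sub_mul_dslope_of_eq_zero hgρ, (hZ ρ' hρ').2, mul_zero]
        exact ⟨(hZ ρ' hρ').1, rfl⟩
    · rw [eq_sub_mul_dslope_of_eq_zero hgρ z, hgh z, Multiset.map_cons, Multiset.prod_cons,
        mul_assoc]

theorem norm_prod_map_sub (Z : Multiset ℂ) (z : ℂ) :
    ‖(Z.map (z - ·)).prod‖ = (Z.map (‖z - ·‖)).prod := by
  simpa [Multiset.map_map] using (Multiset.prod_hom (Z.map (z - ·)) (normHom : ℂ →*₀ ℝ)).symm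

theorem Multiset.prod_map_le_pow_of_card_le {α : Type*} {Z : Multiset α} {f : α → ℝ} {R : ℝ}
    {N : ℕ} (hR : 1 ≤ R) (h0 : ∀ x ∈ Z, 0 ≤ f x) (hf : ∀ x ∈ Z, f x ≤ R)
    (hcard : Multiset.card Z ≤ N) : (Z.map f).prod ≤ R ^ N :=
  calc (Z.map f).prod ≤ (Z.map fun _ => R).prod := Multiset.prod_map_le_prod_map₀ _ _ h0 hf
    _ = R ^ Multiset.card Z := by rw [Multiset.map_const', Multiset.prod_replicate]
    _ ≤ R ^ N := pow_le_pow_right₀ hR hcard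

theorem abs_log_norm_sub_log_norm_le_of_ne_zero {h : ℂ → ℂ} {c z : ℂ} {R ρ K : ℝ}
    (hd : DifferentiableOn ℂ h (ball c R)) (hne : ∀ w ∈ ball c R, h w ≠ 0) (hK : 0 < K)
    (hbound : ∀ w ∈ ball c R, ‖h w‖ ≤ Real.exp K * ‖h c‖) (hρR : ρ < R)
    (hz : z ∈ closedBall c ρ) :
    |Real.log ‖h z‖ - Real.log ‖h c‖| ≤ 2 * K * ρ / (R - ρ) := by
  have hzc : ‖z - c‖ ≤ ρ := mem_closedBall_iff_norm.mp hz
  have hR : 0 < R := (norm_nonneg _).trans_lt (hzc.trans_lt hρR)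
  obtain ⟨F, hFan, hFre⟩ : ∃ F : ℂ → ℂ, AnalyticOnNhd ℂ F (ball c R) ∧
      Set.EqOn (fun w => (F w).re) (fun w => Real.log ‖h w‖) (ball c R) :=
    InnerProductSpace.HarmonicOnNhd.exists_analyticOnNhd_ball_re_eq fun w hw =>
      ((hd.analyticOnNhd isOpen_ball) w hw).harmonicAt_log_norm (hne w hw)
  set G : ℂ → ℂ := fun w => F (c + w) - F c
  have hmem : ∀ w ∈ ball (0 : ℂ) R, c + w ∈ ball c R := fun w hw => by
    simpa [mem_ball_iff_norm] using hw
  have hG : DifferentiableOn ℂ G (ball 0 R) := fun w hw =>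
    (((hFan _ (hmem w hw)).differentiableAt.comp w (differentiableAt_id.const_add c)).sub_const
      _).differentiableWithinAt
  have hGre : ∀ w ∈ ball (0 : ℂ) R, (G w).re = Real.log ‖h (c + w)‖ - Real.log ‖h c‖ :=
    fun w hw => congrArg₂ (· - ·) (hFre (hmem w hw)) (hFre (mem_ball_self hR))
  have hGK : Set.MapsTo G (ball 0 R) {w | w.re ≤ K} := by
    intro w hw
    have hpos : 0 < ‖h c‖ := norm_pos_iff.mpr (hne c (mem_ball_self hR))
    have := Real.log_le_log (norm_pos_iff.mpr (hne _ (hmem w hw))) (hbound _ (hmem w hw))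
    rw [Real.log_mul (Real.exp_pos K).ne' hpos.ne', Real.log_exp] at this
    simp only [Set.mem_ofPred_eq, hGre w hw]
    linarith
  have hw : z - c ∈ ball (0 : ℂ) R := mem_ball_zero_iff.mpr (hzc.trans_lt hρR)
  have hρ : 0 ≤ ρ := (norm_nonneg _).trans hzc
  calc |Real.log ‖h z‖ - Real.log ‖h c‖| = |(G (z - c)).re| := by
        rw [hGre _ hw, add_sub_cancel]
    _ ≤ ‖G (z - c)‖ := Complex.abs_re_le_norm _
    _ ≤ 2 * K * ‖z - c‖ / (R - ‖z - c‖) :=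
        Complex.borelCaratheodory_zero hK hG hGK hR hw (by simp [G])
    _ ≤ 2 * K * ρ / (R - ρ) := by gcongr

theorem norm_le_exp_mul_norm_of_ne_zero {h : ℂ → ℂ} {c z₁ z₂ : ℂ} {R ρ K : ℝ}
    (hd : DifferentiableOn ℂ h (ball c R)) (hne : ∀ w ∈ ball c R, h w ≠ 0) (hK : 0 < K)
    (hbound : ∀ w ∈ ball c R, ‖h w‖ ≤ Real.exp K * ‖h c‖) (hρR : ρ < R)
    (hz₁ : z₁ ∈ closedBall c ρ) (hz₂ : z₂ ∈ closedBall c ρ) :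
    ‖h z₁‖ ≤ Real.exp (4 * K * ρ / (R - ρ)) * ‖h z₂‖ := by
  have h₁ := abs_le.mp (abs_log_norm_sub_log_norm_le_of_ne_zero hd hne hK hbound hρR hz₁)
  have h₂ := abs_le.mp (abs_log_norm_sub_log_norm_le_of_ne_zero hd hne hK hbound hρR hz₂)
  have hpos : ∀ {z}, z ∈ closedBall c ρ → 0 < ‖h z‖ := fun hz =>
    norm_pos_iff.mpr (hne _ (closedBall_subset_ball hρR hz))
  rw [← Real.exp_log (hpos hz₁), ← Real.exp_log (hpos hz₂), ← Real.exp_add, Real.exp_le_exp]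
  linarith [show 4 * K * ρ / (R - ρ) = 2 * (2 * K * ρ / (R - ρ)) by ring]

theorem norm_le_mul_norm_of_forall_zero_norm_sub_le {f : ℂ → ℂ} (hf : Differentiable ℂ f)
    {c z₁ z₂ : ℂ} {R r M β : ℝ} {N : ℕ} (hR : 1 ≤ R) (hrR : r < R) (hβ : 0 < β)
    (hβc : β < ‖f c‖) (hM : ∀ z ∈ sphere c (3 * R), ‖f z‖ ≤ M) (hMN : M ≤ 2 ^ N * β)
    (hz₁ : z₁ ∈ closedBall c r) (hz₂ : z₂ ∈ closedBall c r)
    (hzeros : ∀ ρ ∈ closedBall c R, f ρ = 0 → ‖z₁ - ρ‖ ≤ ‖z₂ - ρ‖) :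
    ‖f z₁‖ ≤ Real.exp (4 * Real.log (M * R ^ N / β) * r / (R - r)) * ‖f z₂‖ := by
  obtain ⟨Z, h, hh, hcard, hZ, hne, hfac⟩ := exists_factor_zeros_closedBall hf (by positivity)
    hβ.le hβc fun z hz => (hM z hz).trans hMN
  have hnorm : ∀ z, ‖f z‖ = (Z.map (‖z - ·‖)).prod * ‖h z‖ := fun z => by
    rw [hfac, norm_mul, norm_prod_map_sub]
  have hsphere : ∀ z ∈ sphere c (3 * R), ‖h z‖ ≤ M := by
    intro z hz
    refine le_trans ?_ ((hnorm z).symm.trans_le (hM z hz))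
    refine le_mul_of_one_le_left (norm_nonneg _) (Multiset.one_le_prod_map fun ρ hρ => ?_)
    rw [← dist_eq_norm]
    linarith [dist_triangle z ρ c, mem_sphere.mp hz, mem_closedBall.mp (hZ ρ hρ).1]
  have hhc : β ≤ R ^ N * ‖h c‖ :=
    calc β ≤ ‖f c‖ := hβc.le
      _ = _ := hnorm c
      _ ≤ R ^ N * ‖h c‖ := by
        gcongr
        refine Multiset.prod_map_le_pow_of_card_le hR (fun _ _ => norm_nonneg _) (fun ρ hρ => ?_)
          hcard
        rw [← dist_eq_norm, dist_comm]
        exact (hZ ρ hρ).1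
  have hfc : ‖f c‖ ≤ M := norm_le_of_forall_mem_sphere_norm_le hf (by positivity) hM
    (mem_closedBall_self (by positivity))
  have hK : 1 < M * R ^ N / β := by
    rw [one_lt_div hβ]
    nlinarith [one_le_pow₀ (n := N) hR]
  have hbound : ∀ w ∈ ball c R, ‖h w‖ ≤ Real.exp (Real.log (M * R ^ N / β)) * ‖h c‖ := by
    intro w hw
    have hM0 : 0 ≤ M := (norm_nonneg _).trans hfc
    rw [Real.exp_log (by linarith)]
    calc ‖h w‖ ≤ M := norm_le_of_forall_mem_sphere_norm_le hh (by positivity) hsphere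
          (closedBall_subset_closedBall (by linarith) (ball_subset_closedBall hw))
      _ = M / β * β := by field_simp
      _ ≤ M / β * (R ^ N * ‖h c‖) := by gcongr
      _ = M * R ^ N / β * ‖h c‖ := by ring
  have hratio := norm_le_exp_mul_norm_of_ne_zero hh.differentiableOn
    (fun w hw => hne w (ball_subset_closedBall hw)) (Real.log_pos hK) hbound hrR hz₁ hz₂
  have hprod : (Z.map (‖z₁ - ·‖)).prod ≤ (Z.map (‖z₂ - ·‖)).prod :=
    Multiset.prod_map_le_prod_map₀ _ _ (fun _ _ => norm_nonneg _) fun ρ hρ =>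
      hzeros ρ (hZ ρ hρ).1 (hZ ρ hρ).2
  rw [hnorm, hnorm, mul_left_comm]
  exact mul_le_mul hprod hratio (norm_nonneg _)
    (Multiset.prod_map_nonneg fun _ _ => norm_nonneg _)

theorem norm_sub_le_norm_add_ofReal_sub {z ρ : ℂ} {ε : ℝ} (hρ : ρ.re ≤ z.re) (hε : 0 ≤ ε) :
    ‖z - ρ‖ ≤ ‖z + ε - ρ‖ := by
  rw [← sq_le_sq₀ (norm_nonneg _) (norm_nonneg _), Complex.sq_norm, Complex.sq_norm,
    Complex.normSq_apply, Complex.normSq_apply]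
  simp only [Complex.sub_re, Complex.add_re, Complex.ofReal_re, Complex.sub_im, Complex.add_im,
    Complex.ofReal_im, add_zero]
  nlinarith

open Filter Topology Finset Complex

noncomputable def dirichletPolynomial (m : ℕ) (a : ℕ → ℂ) (s : ℂ) : ℂ :=
  ∑ k ∈ Icc 1 m, a k * (k : ℂ) ^ (-s)

theorem differentiable_dirichletPolynomial (m : ℕ) (a : ℕ → ℂ) :
    Differentiable ℂ (dirichletPolynomial m a) := fun _ =>
  DifferentiableAt.fun_sum fun _ hk => (differentiableAt_id.neg.const_cpow
    (Or.inl (Nat.cast_ne_zero.mpr (Nat.one_le_iff_ne_zero.mp (mem_Icc.mp hk).1)))).const_mul _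

theorem norm_mul_natCast_cpow_neg_le (b : ℂ) {k : ℕ} (hk : 1 ≤ k) {s : ℂ} {σ : ℝ}
    (hσ : σ ≤ s.re) : ‖b * (k : ℂ) ^ (-s)‖ ≤ ‖b‖ * (k : ℝ) ^ (-σ) := by
  rw [norm_mul, norm_natCast_cpow_of_pos hk, neg_re]
  gcongr
  exact_mod_cast hk

theorem norm_dirichletPolynomial_le (m : ℕ) (a : ℕ → ℂ) {s : ℂ} {σ : ℝ} (hσ : σ ≤ s.re) :
    ‖dirichletPolynomial m a s‖ ≤ ∑ k ∈ Icc 1 m, ‖a k‖ * (k : ℝ) ^ (-σ) :=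
  norm_sum_le_of_le _ fun _ hk => norm_mul_natCast_cpow_neg_le _ (mem_Icc.mp hk).1 hσ

theorem eventually_norm_dirichletPolynomial_gt {m : ℕ} (hm : 1 ≤ m) {a : ℕ → ℂ}
    (ha1 : a 1 ≠ 0) :
    ∀ᶠ σ in atTop, ∀ s : ℂ, σ ≤ s.re → ‖a 1‖ / 2 < ‖dirichletPolynomial m a s‖ := by
  have htail : Tendsto (fun σ : ℝ => ∑ k ∈ Ioc 1 m, ‖a k‖ * (k : ℝ) ^ (-σ)) atTop (𝓝 0) := by
    rw [← sum_const_zero (s := Ioc 1 m)]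
    refine tendsto_finsetSum _ fun k hk => ?_
    have hk : 1 < (k : ℝ) := by exact_mod_cast (mem_Ioc.mp hk).1
    simpa using ((tendsto_rpow_atBot_of_base_gt_one _ hk).comp tendsto_neg_atTop_atBot).const_mul
      ‖a k‖
  filter_upwards [htail.eventually (gt_mem_nhds (half_pos (norm_pos_iff.mpr ha1)))]
    with σ hσ s hs
  have hsplit : dirichletPolynomial m a s = a 1 + ∑ k ∈ Ioc 1 m, a k * (k : ℂ) ^ (-s) := by
    rw [dirichletPolynomial, ← add_sum_erase _ _ (mem_Icc.mpr ⟨le_rfl, hm⟩), Icc_erase_left]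
    simp
  have htail_lt : ‖∑ k ∈ Ioc 1 m, a k * (k : ℂ) ^ (-s)‖ < ‖a 1‖ / 2 :=
    (norm_sum_le_of_le _ fun k hk =>
      norm_mul_natCast_cpow_neg_le _ (mem_Ioc.mp hk).1.le hs).trans_lt hσ
  rw [hsplit]
  linarith [norm_sub_le_norm_add (a 1) (∑ k ∈ Ioc 1 m, a k * (k : ℂ) ^ (-s))]

theorem dirichlet_polynomial_ratio_bounded (m : ℕ) (hm : 1 ≤ m) (a : ℕ → ℂ)
    (ha1 : a 1 ≠ 0) (r : ℝ)
    (hzeros : ∀ ρ : ℂ, (∑ k ∈ Finset.Icc 1 m, a k * (k : ℂ) ^ (-ρ)) = 0 → ρ.re ≤ r) :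
    ∃ C > (0 : ℝ), ∃ ε₀ > (0 : ℝ), ∀ t : ℝ, ∀ ε : ℝ, 0 < ε → ε ≤ ε₀ →
      ‖∑ k ∈ Finset.Icc 1 m, a k * (k : ℂ) ^ (-((r : ℂ) + t * Complex.I))‖ ≤
        C * ‖∑ k ∈ Finset.Icc 1 m, a k * (k : ℂ) ^ (-((r : ℂ) + ε + t * Complex.I))‖ := by
  obtain ⟨σ, hσ, hσr⟩ :=
    ((eventually_norm_dirichletPolynomial_gt hm ha1).and (eventually_ge_atTop (r + 1))).exists
  set R := σ - r + 1
  set β := ‖a 1‖ / 2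
  set M := ∑ k ∈ Icc 1 m, ‖a k‖ * (k : ℝ) ^ (-(σ - 3 * R))
  obtain ⟨N, hN⟩ := pow_unbounded_of_one_lt (M / β) one_lt_two
  have hβ : 0 < β := half_pos (norm_pos_iff.mpr ha1)
  refine ⟨_, Real.exp_pos (4 * Real.log (M * R ^ N / β) * (σ - r) / (R - (σ - r))), 1, one_pos,
    fun t ε hε hε1 => ?_⟩
  have hdist : ∀ x : ℝ, dist ((x : ℂ) + t * I) (σ + t * I) = |x - σ| := fun x => by
    rw [dist_eq_norm, add_sub_add_right_eq_sub, ← ofReal_sub, norm_real, Real.norm_eq_abs]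
  refine norm_le_mul_norm_of_forall_zero_norm_sub_le (differentiable_dirichletPolynomial m a)
    (c := σ + t * I) (by linarith) (by linarith) hβ (hσ _ (by simp)) (fun z hz => ?_)
    ((div_lt_iff₀ hβ).mp hN).le ?_ ?_ fun ρ _ hρ => ?_
  · have hre := (abs_le.mp ((abs_re_le_norm _).trans (mem_sphere_iff_norm.mp hz).le)).1
    simp only [sub_re, add_re, ofReal_re, mul_re, I_re, I_im, ofReal_im, mul_zero, mul_one,
      sub_self, add_zero] at hre
    exact norm_dirichletPolynomial_le m a (by linarith)
  · rw [mem_closedBall, hdist, abs_of_nonpos (by linarith)]; linarith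
  · rw [mem_closedBall, ← ofReal_add, hdist, abs_le]; constructor <;> linarith
  · rw [add_right_comm]
    exact norm_sub_le_norm_add_ofReal_sub (by simpa using hzeros ρ hρ) hε.le
end
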